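/- There is no absolute constant c > 0 such that every 2n-vertex digraph with minimum out-degree at least s contains an n-vertex induced subdigraph with minimum out-degree at least s/2 − c. More precisely, for every constant c there exist n and a 2n-vertex digraph D with minimum out-degree s = n−1 such that every n-vertex induced subdigraph of D has minimum out-degree strictly less than s/2 − c. -/

import Mathlib

open Finset

/-- Out-degree of `v` within the induced subdigraph on `X`. -/
def outDegIn {V : Type*} [DecidableEq V] (A : V → V → Prop) [DecidableRel A]
    (X : Finset V) (v : V) : ℕ :=
  (X.filter (fun w => A v w)).card

/-- Minimum out-degree of the induced subdigraph on `X` (0 for the empty digraph). -/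
def minOutDeg {V : Type*} [DecidableEq V] (A : V → V → Prop) [DecidableRel A]
    (X : Finset V) : ℕ :=
  if h : X.Nonempty then X.inf' h (outDegIn A X) else 0

/-!
The tower `T_j` is the `j`-fold lexicographic blow-up of the directed triangle `p → p + 1` on
`Fin 3`: its vertices are words of `j` trits, and `u → v` when, at the first position where they
differ, the trit of `v` is that of `u` plus one. It is out-regular of degree `(3^j - 1)/2`.
Splitting a vertex set `Y` into its three top-level layers and recursing into a well-chosen layer
shows that `Y` contains a vertex of out-degree at most `(|Y| - w |Y|)/2` in `Y`, where `w k` is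
the number of nonzero digits of `k` in balanced ternary.

Adding an apex, which receives every arc and copies the out-neighbourhood of one tower vertex,
gives a digraph on `3^j + 1 = 2n` vertices of minimum out-degree `n - 1`. An `n`-set meets the
tower in `(3^j ± 1)/2` vertices, numbers of balanced-ternary weight at least `j`, so it spans
minimum out-degree at most `(n + 1 - j)/2`; take `j > 2c + 2`.
-/

/-- The last balanced-ternary digit of `3k + 2 = 3(k + 1) - 1` is `-1`. -/
def balancedTernaryWeight (n : ℕ) : ℕ :=
  if n = 0 then 0
  else if n % 3 = 0 then balancedTernaryWeight (n / 3)
  else if n % 3 = 1 then balancedTernaryWeight (n / 3) + 1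
  else balancedTernaryWeight (n / 3 + 1) + 1
termination_by n
decreasing_by all_goals omega

@[simp] lemma balancedTernaryWeight_zero : balancedTernaryWeight 0 = 0 := by
  rw [balancedTernaryWeight]; simp

lemma balancedTernaryWeight_three_mul (k : ℕ) :
    balancedTernaryWeight (3 * k) = balancedTernaryWeight k := by
  rcases Nat.eq_zero_or_pos k with rfl | hk
  · simp
  · rw [balancedTernaryWeight, if_neg (by omega), if_pos (by omega),
      Nat.mul_div_cancel_left _ (by norm_num)]

lemma balancedTernaryWeight_three_mul_add_one (k : ℕ) :
    balancedTernaryWeight (3 * k + 1) = balancedTernaryWeight k + 1 := by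
  rw [balancedTernaryWeight, if_neg (by omega), if_neg (by omega), if_pos (by omega)]
  congr 2; omega

lemma balancedTernaryWeight_three_mul_add_two (k : ℕ) :
    balancedTernaryWeight (3 * k + 2) = balancedTernaryWeight (k + 1) + 1 := by
  rw [balancedTernaryWeight, if_neg (by omega), if_neg (by omega), if_neg (by omega)]
  congr 3; omega

lemma balancedTernaryWeight_succ_le_and_le_succ (m : ℕ) :
    balancedTernaryWeight (m + 1) ≤ balancedTernaryWeight m + 1 ∧
      balancedTernaryWeight m ≤ balancedTernaryWeight (m + 1) + 1 := by
  induction m using Nat.strong_induction_on with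
  | _ m ih =>
    obtain ⟨k, rfl | rfl | rfl⟩ : ∃ k, m = 3 * k ∨ m = 3 * k + 1 ∨ m = 3 * k + 2 :=
      ⟨m / 3, by omega⟩
    · rw [balancedTernaryWeight_three_mul, balancedTernaryWeight_three_mul_add_one]
      omega
    · rw [balancedTernaryWeight_three_mul_add_one, balancedTernaryWeight_three_mul_add_two]
      have := ih k (by omega)
      omega
    · rw [balancedTernaryWeight_three_mul_add_two, show 3 * k + 2 + 1 = 3 * (k + 1) by ring,
        balancedTernaryWeight_three_mul]
      omega

lemma balancedTernaryWeight_le_add_dist (m n : ℕ) :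
    balancedTernaryWeight m ≤ balancedTernaryWeight n + m.dist n := by
  have step (a k : ℕ) : balancedTernaryWeight (a + k) ≤ balancedTernaryWeight a + k ∧
      balancedTernaryWeight a ≤ balancedTernaryWeight (a + k) + k := by
    induction k with
    | zero => simp
    | succ k ih =>
      have := balancedTernaryWeight_succ_le_and_le_succ (a + k)
      rw [← add_assoc]
      omega
  rcases le_total n m with hnm | hmn
  · obtain ⟨k, rfl⟩ := Nat.exists_eq_add_of_le hnm
    simpa [Nat.dist_eq_sub_of_le_right hnm] using (step n k).1
  · obtain ⟨k, rfl⟩ := Nat.exists_eq_add_of_le hmn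
    simpa [Nat.dist_eq_sub_of_le hmn] using (step m k).2

lemma balancedTernaryWeight_le_add_dist_three_mul (m y : ℕ) :
    balancedTernaryWeight m ≤
      balancedTernaryWeight y + m.dist (3 * y) / 3 + m.dist (3 * y) % 3 := by
  obtain ⟨z, hmz, hzy⟩ :
      ∃ z, m.dist (3 * z) = m.dist (3 * y) % 3 ∧ z.dist y = m.dist (3 * y) / 3 := by
    refine ⟨if 3 * y ≤ m then y + m.dist (3 * y) / 3 else y - m.dist (3 * y) / 3, ?_⟩
    unfold Nat.dist
    split_ifs <;> omega
  have h1 := balancedTernaryWeight_le_add_dist m (3 * z)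
  have h2 := balancedTernaryWeight_le_add_dist z y
  rw [balancedTernaryWeight_three_mul] at h1
  omega

lemma exists_balancedTernaryWeight_rotation_of_min (t : Fin 3 → ℕ) (h₁ : t 0 ≤ t 1)
    (h₂ : t 0 ≤ t 2) (hpos : 1 ≤ ∑ i, t i) :
    ∃ p, 1 ≤ t p ∧
      balancedTernaryWeight (∑ i, t i) + t (p + 1) ≤
        balancedTernaryWeight (t p) + t (p + 2) := by
  rw [Fin.sum_univ_three] at hpos ⊢
  have hnear₀ := balancedTernaryWeight_le_add_dist_three_mul (t 0 + t 1 + t 2) (t 0)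
  have hnear₂ := balancedTernaryWeight_le_add_dist_three_mul (t 0 + t 1 + t 2) (t 2)
  have hlip₂ := balancedTernaryWeight_le_add_dist (t 0 + t 1 + t 2) (t 2)
  unfold Nat.dist at hnear₀ hnear₂ hlip₂
  -- Unless layer 2 exceeds the smallest layer 0 by more than twice the excess of layer 1,
  -- the sum is close enough to `3 * t 2` to recurse into layer 2.
  by_cases hsmall : 1 ≤ t 0 ∧ 2 * (t 1 - t 0) < t 2 - t 0
  · refine ⟨0, hsmall.1, ?_⟩
    change _ + t 1 ≤ _ + t 2
    omega
  by_cases hlarge : 1 ≤ t 2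
  · refine ⟨2, hlarge, ?_⟩
    change _ + t 0 ≤ _ + t 1
    omega
  · have ht₀ : t 0 = 0 := by omega
    have ht₂ : t 2 = 0 := by omega
    refine ⟨1, by omega, ?_⟩
    change _ + t 2 ≤ _ + t 0
    simp [ht₀, ht₂]

/-- A vertex in layer `p` of a triangle blow-up sees all of layer `p + 1` and none of
layer `p + 2`, so this is the layer to recurse into. -/
lemma exists_balancedTernaryWeight_rotation (s : Fin 3 → ℕ) (hpos : 1 ≤ ∑ i, s i) :
    ∃ p, 1 ≤ s p ∧
      balancedTernaryWeight (∑ i, s i) + s (p + 1) ≤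
        balancedTernaryWeight (s p) + s (p + 2) := by
  obtain ⟨q, -, hq⟩ := Finset.exists_min_image univ s univ_nonempty
  have hsum : ∑ i, s (i + q) = ∑ i, s i := Equiv.sum_comp (Equiv.addRight q) s
  obtain ⟨p, hp, hineq⟩ := exists_balancedTernaryWeight_rotation_of_min (fun i => s (i + q))
    (by simpa using hq _ (mem_univ _)) (by simpa using hq _ (mem_univ _)) (hsum ▸ hpos)
  refine ⟨p + q, hp, ?_⟩
  simp only [hsum] at hineq
  simpa only [add_right_comm _ q] using hineq

lemma balancedTernaryWeight_three_pow_div_two (j : ℕ) :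
    balancedTernaryWeight ((3 ^ j - 1) / 2) = j ∧
      balancedTernaryWeight ((3 ^ j + 1) / 2) = j + 1 := by
  induction j with
  | zero => simpa using balancedTernaryWeight_three_mul_add_one 0
  | succ j ih =>
    obtain ⟨t, ht, hodd⟩ : ∃ t, 3 ^ j = t ∧ t % 2 = 1 :=
      ⟨_, rfl, Nat.odd_iff.mp (Odd.pow (by decide))⟩
    rw [ht] at ih
    rw [pow_succ, ht, show (t * 3 - 1) / 2 = 3 * ((t - 1) / 2) + 1 by omega,
      show (t * 3 + 1) / 2 = 3 * ((t - 1) / 2) + 2 by omega,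
      balancedTernaryWeight_three_mul_add_one, balancedTernaryWeight_three_mul_add_two,
      show (t - 1) / 2 + 1 = (t + 1) / 2 by omega]
    omega

section Digraph

variable {V : Type*} [DecidableEq V] (A : V → V → Prop) [DecidableRel A]

lemma minOutDeg_le_outDegIn {X : Finset V} {v : V} (hv : v ∈ X) :
    minOutDeg A X ≤ outDegIn A X v := by
  rw [minOutDeg, dif_pos ⟨v, hv⟩]
  exact inf'_le _ hv

lemma minOutDeg_eq_outDegIn {X : Finset V} {v : V} (hv : v ∈ X)
    (hmin : ∀ w ∈ X, outDegIn A X v ≤ outDegIn A X w) : minOutDeg A X = outDegIn A X v :=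
  (minOutDeg_le_outDegIn A hv).antisymm <| by
    rw [minOutDeg, dif_pos ⟨v, hv⟩]
    exact le_inf' _ _ hmin

lemma minOutDeg_map_equiv {W : Type*} [DecidableEq W] (B : W → W → Prop) [DecidableRel B]
    (e : V ≃ W) (h : ∀ u v, A u v ↔ B (e u) (e v)) (X : Finset V) :
    minOutDeg A X = minOutDeg B (X.map e.toEmbedding) := by
  have hdeg (v : V) : outDegIn A X v = outDegIn B (X.map e.toEmbedding) (e v) := by
    simp only [outDegIn, filter_map, card_map]
    congr 1
    exact filter_congr fun w _ => h v w
  by_cases hX : X.Nonempty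
  · rw [minOutDeg, minOutDeg, dif_pos hX, dif_pos (hX.map), inf'_map]
    exact inf'_congr hX rfl fun v _ => hdeg v
  · rw [minOutDeg, minOutDeg, dif_neg hX, dif_neg (by simpa using hX)]

end Digraph

lemma Fin.sum_univ_three_rotate {M : Type*} [AddCommMonoid M] (s : Fin 3 → M) (p : Fin 3) :
    ∑ i, s i = s p + s (p + 1) + s (p + 2) := by
  fin_cases p <;> simp [Fin.sum_univ_three] <;> abel

def TernarySparse {V : Type*} [DecidableEq V] (A : V → V → Prop) [DecidableRel A] : Prop :=
  ∀ Y : Finset V, Y.Nonempty → ∃ v ∈ Y, 2 * outDegIn A Y v + balancedTernaryWeight #Y ≤ #Y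

lemma ternarySparse_bot {V : Type*} [DecidableEq V] :
    TernarySparse (fun _ _ : V => False) := by
  rintro Y ⟨v, hv⟩
  refine ⟨v, hv, ?_⟩
  simpa [outDegIn, Nat.dist] using balancedTernaryWeight_le_add_dist #Y 0

section TriangleLex

variable {α : Type*}

def triangleLex (R : α → α → Prop) (u v : Fin 3 × α) : Prop :=
  if u.1 = v.1 then R u.2 v.2 else v.1 = u.1 + 1

instance (R : α → α → Prop) [DecidableRel R] : DecidableRel (triangleLex R) :=
  fun u v => by unfold triangleLex; infer_instance

noncomputable def layer {β : Type*} (Y : Finset (β × α)) (p : β) : Finset α :=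
  Y.preimage (Prod.mk p) (Prod.mk_right_injective p).injOn

@[simp] lemma mem_layer {β : Type*} {Y : Finset (β × α)} {p : β} {x : α} :
    x ∈ layer Y p ↔ (p, x) ∈ Y :=
  mem_preimage

lemma card_filter_fst_eq_and {β : Type*} [DecidableEq α] [DecidableEq β] (Y : Finset (β × α))
    (p : β) (P : α → Prop) [DecidablePred P] :
    #{w ∈ Y | w.1 = p ∧ P w.2} = #{x ∈ layer Y p | P x} := by
  symm
  rw [← card_map ⟨Prod.mk p, Prod.mk_right_injective p⟩]
  congr 1
  ext ⟨q, x⟩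
  simp only [mem_filter, mem_map, mem_layer, Function.Embedding.coeFn_mk, Prod.mk.injEq]
  aesop

lemma card_filter_fst_eq {β : Type*} [DecidableEq α] [DecidableEq β] (Y : Finset (β × α))
    (p : β) : #{w ∈ Y | w.1 = p} = #(layer Y p) := by
  simpa using card_filter_fst_eq_and Y p fun _ => True

lemma sum_card_layer {β : Type*} [DecidableEq α] [DecidableEq β] [Fintype β]
    (Y : Finset (β × α)) : ∑ p, #(layer Y p) = #Y := by
  rw [card_eq_sum_card_fiberwise (f := Prod.fst) (t := univ) fun _ _ => mem_univ _]
  exact sum_congr rfl fun p _ => (card_filter_fst_eq Y p).symm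

lemma layer_univ {β : Type*} [Fintype α] [Fintype β] (p : β) :
    layer (univ : Finset (β × α)) p = univ :=
  preimage_univ _

variable [DecidableEq α] (R : α → α → Prop) [DecidableRel R]

lemma outDegIn_triangleLex (Y : Finset (Fin 3 × α)) (p : Fin 3) (x : α) :
    outDegIn (triangleLex R) Y (p, x) = outDegIn R (layer Y p) x + #(layer Y (p + 1)) := by
  have hne (q : Fin 3) : q ≠ q + 1 := by fin_cases q <;> decide
  have hsplit : {w ∈ Y | triangleLex R (p, x) w} =
      {w ∈ Y | w.1 = p ∧ R x w.2} ∪ {w ∈ Y | w.1 = p + 1} := by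
    rw [← filter_or]
    refine filter_congr fun ⟨q, y⟩ _ => ?_
    by_cases hq : p = q
    · subst hq; simp [triangleLex, hne]
    · simp [triangleLex, hq, Ne.symm hq]
  rw [outDegIn, hsplit, card_union_of_disjoint, card_filter_fst_eq_and, card_filter_fst_eq]
  · rfl
  · rw [disjoint_filter]
    rintro w _ ⟨rfl, -⟩ h
    exact hne _ h

lemma TernarySparse.triangleLex (hR : TernarySparse R) : TernarySparse (triangleLex R) := by
  intro Y hY
  have hsum := sum_card_layer Y
  obtain ⟨p, hp, hwt⟩ :=
    exists_balancedTernaryWeight_rotation (fun q => #(layer Y q)) (hsum ▸ hY.card_pos)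
  obtain ⟨x, hx, hdeg⟩ := hR (layer Y p) (card_pos.mp hp)
  refine ⟨(p, x), mem_layer.mp hx, ?_⟩
  have hrot := Fin.sum_univ_three_rotate (fun q => #(layer Y q)) p
  simp only [hsum] at hwt hrot
  rw [outDegIn_triangleLex]
  omega

lemma outDegIn_triangleLex_univ [Fintype α] (p : Fin 3) (x : α) :
    outDegIn (triangleLex R) univ (p, x) = outDegIn R univ x + Fintype.card α := by
  rw [outDegIn_triangleLex, layer_univ, layer_univ, card_univ]

end TriangleLex

theorem exists_ternarySparse_regular (j : ℕ) :
    ∃ (α : Type) (_ : Fintype α) (_ : DecidableEq α) (R : α → α → Prop)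
      (_ : DecidableRel R), Fintype.card α = 3 ^ j ∧ (∀ x, ¬ R x x) ∧
        (∀ x, 2 * outDegIn R univ x + 1 = 3 ^ j) ∧ TernarySparse R := by
  induction j with
  | zero =>
    exact ⟨Unit, inferInstance, inferInstance, fun _ _ => False, inferInstance, rfl,
      fun _ => id, by simp [outDegIn], ternarySparse_bot⟩
  | succ j ih =>
    obtain ⟨α, _, _, R, _, hcard, hirr, hreg, hR⟩ := ih
    refine ⟨Fin 3 × α, inferInstance, inferInstance, triangleLex R, inferInstance, ?_, ?_, ?_,
      hR.triangleLex R⟩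
    · simp [hcard, pow_succ, mul_comm]
    · rintro ⟨p, x⟩
      simpa [triangleLex] using hirr x
    · rintro ⟨p, x⟩
      rw [outDegIn_triangleLex_univ, pow_succ, ← hcard]
      have := hreg x
      omega

lemma card_eraseNone_add_ite {α : Type*} [DecidableEq α] (X : Finset (Option α)) :
    #X.eraseNone + (if none ∈ X then 1 else 0) = #X := by
  split_ifs with h
  · have := card_pos.mpr ⟨_, h⟩
    rw [card_eraseNone_of_mem h]
    omega
  · simp [card_eraseNone_of_not_mem h]

section Apex

variable {α : Type*} (R : α → α → Prop) (x₀ : α)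

/-- The apex `none` receives an arc from every other vertex and copies the out-neighbourhood
of `x₀`. -/
def addApex : Option α → Option α → Prop
  | u, some y => R (u.getD x₀) y
  | u, none => u.isSome

instance [DecidableRel R] : DecidableRel (addApex R x₀)
  | u, some y => inferInstanceAs (Decidable (R (u.getD x₀) y))
  | u, none => inferInstanceAs (Decidable (u.isSome = true))

lemma addApex_irrefl (hirr : ∀ x, ¬ R x x) : ∀ u, ¬ addApex R x₀ u u
  | none => by simp [addApex]
  | some x => hirr x

variable [DecidableEq α] [DecidableRel R]

lemma outDegIn_addApex (X : Finset (Option α)) (u : Option α) :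
    outDegIn (addApex R x₀) X u =
      outDegIn R X.eraseNone (u.getD x₀) + if none ∈ X ∧ u.isSome then 1 else 0 := by
  rw [outDegIn, ← card_eraseNone_add_ite]
  congr 1
  · congr 1
    ext x
    rw [mem_eraseNone, mem_filter, mem_filter, mem_eraseNone]
    rfl
  · simp only [mem_filter]
    rfl

lemma TernarySparse.exists_addApex_le (hR : TernarySparse R) {X : Finset (Option α)}
    (hX : X.eraseNone.Nonempty) :
    ∃ v ∈ X,
      2 * outDegIn (addApex R x₀) X v + balancedTernaryWeight #X.eraseNone ≤ #X + 1 := by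
  obtain ⟨x, hx, hdeg⟩ := hR _ hX
  refine ⟨some x, mem_eraseNone.mp hx, ?_⟩
  have hcard := card_eraseNone_add_ite X
  rw [outDegIn_addApex]
  simp only [Option.getD_some, Option.isSome_some, and_true]
  split_ifs at hcard ⊢ <;> omega

lemma TernarySparse.two_mul_minOutDeg_addApex_add_le (hR : TernarySparse R) {j : ℕ}
    (hj : 1 ≤ j) {X : Finset (Option α)} (hX : 2 * #X = 3 ^ j + 1) :
    2 * minOutDeg (addApex R x₀) X + j ≤ #X + 1 := by
  have hcard := card_eraseNone_add_ite X
  have h3 : 3 ≤ 3 ^ j := Nat.le_self_pow (by omega) 3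
  have hwt : j ≤ balancedTernaryWeight #X.eraseNone := by
    obtain ⟨hlow, hhigh⟩ := balancedTernaryWeight_three_pow_div_two j
    split_ifs at hcard
    · rw [show #X.eraseNone = (3 ^ j - 1) / 2 by omega, hlow]
    · rw [show #X.eraseNone = (3 ^ j + 1) / 2 by omega, hhigh]
      omega
  obtain ⟨v, hv, hdeg⟩ :=
    hR.exists_addApex_le R x₀ (X := X) (card_pos.mp (by split_ifs at hcard <;> omega))
  have := minOutDeg_le_outDegIn (addApex R x₀) hv
  omega

lemma minOutDeg_addApex_univ [Fintype α] {d : ℕ} (hreg : ∀ x, outDegIn R univ x = d) :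
    minOutDeg (addApex R x₀) univ = d := by
  have huniv : (univ : Finset (Option α)).eraseNone = univ := by ext; simp
  rw [minOutDeg_eq_outDegIn _ (mem_univ none)] <;> simp [outDegIn_addApex, huniv, hreg]

end Apex

/-- Negative answer to Alon's problem: for every constant `c` there exist `n`
and a `2n`-vertex digraph of minimum out-degree `s = n - 1` in which every
`n`-vertex induced subdigraph has minimum out-degree strictly less than
`s/2 - c`. -/
theorem no_absolute_constant (c : ℝ) :
    ∃ (n : ℕ) (A : Fin (2 * n) → Fin (2 * n) → Bool),
      (∀ v, A v v = false) ∧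
      minOutDeg (fun u v => A u v = true) Finset.univ = n - 1 ∧
      ∀ X : Finset (Fin (2 * n)), X.card = n →
        (minOutDeg (fun u v => A u v = true) X : ℝ) < ((n : ℝ) - 1) / 2 - c := by
  obtain ⟨j, hj₁, hjc⟩ : ∃ j : ℕ, 1 ≤ j ∧ 2 * c + 2 < j :=
    ⟨⌈2 * c⌉₊ + 3, by omega, by have := Nat.le_ceil (2 * c); push_cast; linarith⟩
  obtain ⟨α, _, _, R, _, hcard, hirr, hreg, hR⟩ := exists_ternarySparse_regular j
  obtain ⟨x₀⟩ : Nonempty α := Fintype.card_pos_iff.mp (by rw [hcard]; positivity)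
  obtain ⟨n, hn⟩ : ∃ n, 2 * n = 3 ^ j + 1 :=
    ⟨(3 ^ j + 1) / 2, by have := Nat.odd_iff.mp (Odd.pow (n := j) (by decide : Odd 3)); omega⟩
  let e : Fin (2 * n) ≃ Option α :=
    Fintype.equivOfCardEq (by rw [Fintype.card_fin, Fintype.card_option, hcard, hn])
  have hiso := minOutDeg_map_equiv (fun u v => decide (addApex R x₀ (e u) (e v)) = true)
    (addApex R x₀) e fun u v => decide_eq_true_iff
  refine ⟨n, fun u v => decide (addApex R x₀ (e u) (e v)), fun v => ?_, ?_, fun X hX => ?_⟩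
  · simpa using addApex_irrefl R x₀ hirr (e v)
  · rw [hiso, map_univ_equiv,
      minOutDeg_addApex_univ R x₀ (d := n - 1) fun x => by have := hreg x; omega]
  · have hbound := hR.two_mul_minOutDeg_addApex_add_le R x₀ hj₁
      (X := X.map e.toEmbedding) (by rw [card_map, hX, hn])
    rw [card_map, hX] at hbound
    rw [hiso]
    have : (2 * minOutDeg (addApex R x₀) (X.map e.toEmbedding) + j : ℝ) ≤ n + 1 := by
      exact_mod_cast hbound
    linarith
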